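/- arXiv:0804.1401 — 3 statements merged into one kernel-verified Lean document; each statement's English description precedes it below -/
import Mathlib

section
/- In the braid group B_n, for every i with 1 ≤ i ≤ n-1, σ_i^{-1} = θ^{-1} ρ^{2-i} (σ_1 ρ)^{n-2} ρ^{i-1}, where ρ = σ_{n-1}⋯σ_1 and θ is the full twist. -/
/-!
Conjugation by `ρ` lowers indices, `ρ σ_{j+1} = σ_j ρ`, so `σ_i = ρ^{-(i-1)} σ_1 ρ^{i-1}` and
`(ρ σ_1)^{n-1} = ρ^n`. Dually conjugation by `δ` raises indices, whence `θ = δ^n = (σ_1 δ)^{n-1}`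
commutes with `σ_1 δ` and `δ`, hence with `σ_1` and every `σ_j`: the full twist is central. As
`δ` and `ρ` are conjugate (both are products of all generators), `θ = ρ^n`. The formula then
becomes an identity in the subgroup generated by `ρ` and `σ_1`.
-/

/-- The braid relations on `n` strands, on generators indexed by `Fin (n-1)`
(index `k` represents the Artin generator `σ_{k+1}`). -/
def braidRels (n : ℕ) : Set (FreeGroup (Fin (n - 1))) :=
  {r | (∃ i j : Fin (n - 1), (i : ℕ) + 2 ≤ (j : ℕ) ∧
          r = FreeGroup.of i * FreeGroup.of j * (FreeGroup.of i)⁻¹ * (FreeGroup.of j)⁻¹) ∨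
       (∃ i j : Fin (n - 1), (i : ℕ) + 1 = (j : ℕ) ∧
          r = (FreeGroup.of i * FreeGroup.of j * FreeGroup.of i) *
              (FreeGroup.of j * FreeGroup.of i * FreeGroup.of j)⁻¹)}

/-- The braid group `B_n`. -/
abbrev BraidGroup (n : ℕ) := PresentedGroup (braidRels n)

/-- The Artin generator `σ_i` of `B_n`, for `1 ≤ i ≤ n-1` (junk value `1` otherwise). -/
noncomputable def σ (n i : ℕ) : BraidGroup n :=
  if h : 1 ≤ i ∧ i ≤ n - 1 then PresentedGroup.of (⟨i - 1, by omega⟩ : Fin (n - 1)) else 1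

/-- `ρ = σ_{n-1} ⋯ σ_2 σ_1`. -/
noncomputable def braidρ (n : ℕ) : BraidGroup n :=
  (((List.range (n - 1)).map (fun k => σ n (k + 1))).reverse).prod

/-- `δ = σ_1 σ_2 ⋯ σ_{n-1}`. -/
noncomputable def braidδ (n : ℕ) : BraidGroup n :=
  ((List.range (n - 1)).map (fun k => σ n (k + 1))).prod

/-- The full twist `θ = (σ_1 σ_2 ⋯ σ_{n-1})^n`. -/
noncomputable def braidθ (n : ℕ) : BraidGroup n := braidδ n ^ n

namespace SemiconjBy

variable {M : Type*} [Monoid M] {x : M} {s : ℕ → M} {a m : ℕ}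

theorem pow_of_forall_succ (h : ∀ j, a ≤ j → j < a + m → SemiconjBy x (s j) (s (j + 1))) :
    SemiconjBy (x ^ m) (s a) (s (a + m)) := by
  induction m with
  | zero => simp
  | succ m ih =>
    rw [pow_succ', ← add_assoc]
    exact (h (a + m) (by omega) (by omega)).mul_left (ih fun j hj hjm => h j hj (by omega))

theorem pow_of_forall_pred (h : ∀ j, a ≤ j → j < a + m → SemiconjBy x (s (j + 1)) (s j)) :
    SemiconjBy (x ^ m) (s (a + m)) (s a) := by
  induction m with
  | zero => simp
  | succ m ih =>
    rw [pow_succ, ← add_assoc]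
    exact (ih fun j hj hjm => h j hj (by omega)).mul_left (h (a + m) (by omega) (by omega))

end SemiconjBy

section Monoid

variable {M : Type*} [Monoid M]

theorem mul_pow_eq_prod_mul_pow {x : M} {s : ℕ → M} {a m : ℕ}
    (h : ∀ j, a ≤ j → j + 1 < a + m → SemiconjBy x (s j) (s (j + 1))) :
    (s a * x) ^ m = ((List.range' a m).map s).prod * x ^ m := by
  induction m with
  | zero => simp
  | succ m ih =>
    have hshift : SemiconjBy (x ^ m) (s a) (s (a + m)) :=
      SemiconjBy.pow_of_forall_succ fun j hj hjm => h j hj (by omega)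
    rw [pow_succ, ih fun j hj hjm => h j hj (by omega), List.range'_concat, List.map_append,
      List.prod_append, pow_succ]
    simp only [List.map_cons, List.map_nil, List.prod_cons, List.prod_nil, mul_one, one_mul,
      mul_assoc]
    rw [← mul_assoc (x ^ m), hshift.eq, mul_assoc]

theorem mul_pow_eq_pow_mul_prod {x : M} {s : ℕ → M} {a m : ℕ}
    (h : ∀ j, a ≤ j → j + 1 < a + m → SemiconjBy x (s (j + 1)) (s j)) :
    (x * s a) ^ m = x ^ m * ((List.range' a m).reverse.map s).prod := by
  induction m with
  | zero => simp
  | succ m ih =>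
    have hshift : SemiconjBy (x ^ m) (s (a + m)) (s a) :=
      SemiconjBy.pow_of_forall_pred fun j hj hjm => h j hj (by omega)
    rw [pow_succ', ih fun j hj hjm => h j hj (by omega), List.range'_concat, List.reverse_append,
      List.map_append, List.prod_append, pow_succ']
    simp only [List.reverse_cons, List.reverse_nil, List.nil_append, List.map_cons, List.map_nil,
      List.prod_cons, List.prod_nil, mul_one, one_mul, mul_assoc]
    rw [← mul_assoc (s a), ← hshift.eq, mul_assoc]

variable {p a b s : M}

theorem semiconjBy_mul_mul_mul_of_braid (hab : a * b * a = b * a * b) (hpb : Commute p b)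
    (has : Commute a s) : SemiconjBy (p * (a * (b * s))) a b :=
  calc p * (a * (b * s)) * a = p * (a * b * a) * s := by simp only [mul_assoc, has.symm.eq]
    _ = p * (b * a * b) * s := by rw [hab]
    _ = b * (p * (a * (b * s))) := by simp only [← mul_assoc, hpb.eq]

theorem semiconjBy_mul_mul_mul_of_braid' (hab : a * b * a = b * a * b) (hpb : Commute p b)
    (has : Commute a s) : SemiconjBy (s * (b * (a * p))) b a :=
  calc s * (b * (a * p)) * b = s * (b * a * b) * p := by simp only [mul_assoc, hpb.eq]
    _ = s * (a * b * a) * p := by rw [hab]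
    _ = a * (s * (b * (a * p))) := by simp only [← mul_assoc, has.symm.eq]

end Monoid

theorem List.range'_eq_append_cons_cons {a l j : ℕ} (haj : a ≤ j) (hjl : j + 2 ≤ a + l) :
    List.range' a l =
      List.range' a (j - a) ++ j :: (j + 1) :: List.range' (j + 2) (a + l - (j + 2)) := by
  obtain ⟨p, rfl⟩ : ∃ p, j = a + p := ⟨j - a, by omega⟩
  obtain ⟨q, rfl⟩ : ∃ q, l = p + (q + 2) := ⟨l - p - 2, by omega⟩
  rw [← List.range'_append]
  simp [List.range'_succ]
  omega

section BraidGroup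

variable {n : ℕ}

theorem σ_eq_of {i : ℕ} (h1 : 1 ≤ i) (h2 : i ≤ n - 1) :
    σ n i = PresentedGroup.of (⟨i - 1, by omega⟩ : Fin (n - 1)) :=
  dif_pos ⟨h1, h2⟩

theorem σ_eq_one {i : ℕ} (h : ¬(1 ≤ i ∧ i ≤ n - 1)) : σ n i = 1 :=
  dif_neg h

theorem commute_σ_σ {i j : ℕ} (hij : i + 2 ≤ j) : Commute (σ n i) (σ n j) := by
  by_cases hi : 1 ≤ i ∧ i ≤ n - 1
  · by_cases hj : 1 ≤ j ∧ j ≤ n - 1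
    · rw [σ_eq_of hi.1 hi.2, σ_eq_of hj.1 hj.2]
      refine commutatorElement_eq_one_iff_commute.mp (PresentedGroup.one_of_mem (Or.inl ?_))
      exact ⟨⟨i - 1, by omega⟩, ⟨j - 1, by omega⟩, by simp only; omega, rfl⟩
    · rw [σ_eq_one hj]
      exact Commute.one_right _
  · rw [σ_eq_one hi]
    exact Commute.one_left _

theorem σ_mul_σ_mul_σ {i : ℕ} (h1 : 1 ≤ i) (h2 : i + 2 ≤ n) :
    σ n i * σ n (i + 1) * σ n i = σ n (i + 1) * σ n i * σ n (i + 1) := by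
  rw [σ_eq_of h1 (by omega), σ_eq_of (by omega : 1 ≤ i + 1) (by omega)]
  refine PresentedGroup.mk_eq_mk_of_mul_inv_mem (Or.inr ?_)
  exact ⟨⟨i - 1, by omega⟩, ⟨i + 1 - 1, by omega⟩, by simp only; omega, rfl⟩

theorem commute_σ_prod {j : ℕ} {L : List ℕ} (h : ∀ i ∈ L, i + 2 ≤ j ∨ j + 2 ≤ i) :
    Commute (σ n j) (L.map (σ n)).prod :=
  Commute.list_prod_right _ _ fun g hg => by
    obtain ⟨i, hi, rfl⟩ := List.mem_map.mp hg
    rcases h i hi with hij | hji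
    · exact (commute_σ_σ hij).symm
    · exact commute_σ_σ hji

theorem braidδ_eq_prod : braidδ n = ((List.range' 1 (n - 1)).map (σ n)).prod := by
  simp [braidδ, List.range'_eq_map_range, Function.comp_def, add_comm]

theorem braidρ_eq_prod : braidρ n = ((List.range' 1 (n - 1)).reverse.map (σ n)).prod := by
  simp [braidρ, List.range'_eq_map_range, Function.comp_def, add_comm, List.map_reverse]

theorem semiconjBy_braidδ_σ {j : ℕ} (h1 : 1 ≤ j) (h2 : j + 2 ≤ n) :
    SemiconjBy (braidδ n) (σ n j) (σ n (j + 1)) := by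
  rw [braidδ_eq_prod, List.range'_eq_append_cons_cons h1 (by omega : j + 2 ≤ 1 + (n - 1))]
  simp only [List.map_append, List.map_cons, List.prod_append, List.prod_cons]
  refine semiconjBy_mul_mul_mul_of_braid (σ_mul_σ_mul_σ h1 h2) ?_ (commute_σ_prod ?_)
  · exact (commute_σ_prod fun i hi => by simp [List.mem_range'] at hi; omega).symm
  · intro i hi; simp [List.mem_range'] at hi; omega

theorem semiconjBy_braidρ_σ {j : ℕ} (h1 : 1 ≤ j) (h2 : j + 2 ≤ n) :
    SemiconjBy (braidρ n) (σ n (j + 1)) (σ n j) := by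
  rw [braidρ_eq_prod, List.range'_eq_append_cons_cons h1 (by omega : j + 2 ≤ 1 + (n - 1))]
  simp only [List.reverse_append, List.reverse_cons, List.append_assoc, List.singleton_append,
    List.map_append, List.map_cons, List.map_nil, List.prod_append, List.prod_cons, List.prod_nil,
    one_mul, mul_assoc]
  refine semiconjBy_mul_mul_mul_of_braid' (σ_mul_σ_mul_σ h1 h2) ?_ (commute_σ_prod ?_)
  · exact (commute_σ_prod fun i hi => by simp [List.mem_range'] at hi; omega).symm
  · intro i hi; simp [List.mem_range'] at hi; omega

theorem σ_one_mul_braidδ_pow : (σ n 1 * braidδ n) ^ (n - 1) = braidθ n := by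
  rcases Nat.eq_zero_or_pos n with rfl | hn
  · simp [braidθ]
  rw [mul_pow_eq_prod_mul_pow (s := σ n) fun j hj hjn => semiconjBy_braidδ_σ hj (by omega),
    ← braidδ_eq_prod, ← pow_succ', Nat.sub_add_cancel hn, braidθ]

theorem braidρ_mul_σ_one_pow : (braidρ n * σ n 1) ^ (n - 1) = braidρ n ^ n := by
  rcases Nat.eq_zero_or_pos n with rfl | hn
  · simp
  rw [mul_pow_eq_pow_mul_prod (s := σ n) fun j hj hjn => semiconjBy_braidρ_σ hj (by omega),
    ← braidρ_eq_prod, ← pow_succ, Nat.sub_add_cancel hn]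

theorem braidθ_mem_center : braidθ n ∈ Subgroup.center (BraidGroup n) := by
  have hδ : Commute (braidθ n) (braidδ n) := (Commute.refl _).pow_left n
  have h1 : Commute (braidθ n) (σ n 1) := by
    have h : Commute (braidθ n) (σ n 1 * braidδ n) := by
      rw [← σ_one_mul_braidδ_pow]
      exact (Commute.refl _).pow_left _
    simpa using h.mul_right hδ.inv_right
  have hσ : ∀ j, 1 ≤ j → j ≤ n - 1 → Commute (braidθ n) (σ n j) := by
    intro j hj1 hj2
    have h := SemiconjBy.pow_of_forall_succ (s := σ n) (a := 1) (m := j - 1)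
      fun k hk hkj => semiconjBy_braidδ_σ hk (by omega)
    rw [show 1 + (j - 1) = j by omega] at h
    rw [eq_mul_inv_of_mul_eq h.eq.symm]
    exact ((hδ.pow_right _).mul_right h1).mul_right (hδ.pow_right _).inv_right
  refine Subgroup.mem_center_iff.mpr fun g => Subgroup.mem_centralizer_singleton_iff.mp ?_
  refine PresentedGroup.generated_by _ _ (fun k => ?_) g
  have hk : PresentedGroup.of k = σ n (k + 1) := by
    rw [σ_eq_of (by omega) (by omega)]
    rfl
  rw [Subgroup.mem_centralizer_singleton_iff, hk]
  exact (hσ _ (by omega) (by omega)).symm.eq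

theorem isConj_braidδ_braidρ : IsConj (braidδ n) (braidρ n) := by
  -- `v k = σ_k ⋯ σ_1 · σ_{k+1} ⋯ σ_{n-1}` runs from `v 0 = δ` to `v (n - 1) = ρ`, and
  -- conjugating `v k` by `σ_k ⋯ σ_1` carries `σ_{k+1}` to the front.
  let v : ℕ → BraidGroup n := fun k =>
    ((List.range' 1 k).reverse.map (σ n)).prod * ((List.range' (k + 1) (n - 1 - k)).map (σ n)).prod
  have hstep : ∀ k, k + 1 ≤ n - 1 → IsConj (v k) (v (k + 1)) := by
    intro k hk
    set R := ((List.range' 1 k).reverse.map (σ n)).prod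
    set T := ((List.range' (k + 2) (n - 1 - (k + 1))).map (σ n)).prod
    have hv : v k = R * (σ n (k + 1) * T) := by
      simp only [v, R, T, show n - 1 - k = n - 1 - (k + 1) + 1 by omega, List.range'_succ,
        List.map_cons, List.prod_cons]
    have hv' : v (k + 1) = σ n (k + 1) * R * T := by
      simp [v, R, T, List.range'_concat, Nat.add_comm 1 k]
    have hTR : Commute T R := by
      refine Commute.list_prod_left _ _ fun g hg => ?_
      obtain ⟨i, hi, rfl⟩ := List.mem_map.mp hg
      exact commute_σ_prod fun i' hi' => by simp [List.mem_range'] at hi hi'; omega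
    refine isConj_iff.mpr ⟨R⁻¹, ?_⟩
    calc R⁻¹ * v k * R⁻¹⁻¹ = σ n (k + 1) * (T * R) := by rw [hv, inv_inv]; group
      _ = v (k + 1) := by rw [hTR.eq, hv', mul_assoc]
  have hchain : ∀ k, k ≤ n - 1 → IsConj (v 0) (v k) := by
    intro k hk
    induction k with
    | zero => exact IsConj.refl _
    | succ k ih => exact (ih (by omega)).trans (hstep k hk)
  have h0 : v 0 = braidδ n := by simp [v, braidδ_eq_prod]
  have hn : v (n - 1) = braidρ n := by simp [v, braidρ_eq_prod]
  simpa [h0, hn] using hchain (n - 1) le_rfl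

theorem braidθ_eq_braidρ_pow : braidθ n = braidρ n ^ n :=
  (isConj_braidδ_braidρ.pow n).eq_of_left_mem_center braidθ_mem_center

end BraidGroup

theorem sigma_inv_formula_general (n : ℕ) (i : ℕ) (h1 : 1 ≤ i) (h2 : i ≤ n - 1) :
    (σ n i)⁻¹ =
      (braidθ n)⁻¹ * braidρ n ^ (2 - (i : ℤ)) * (σ n 1 * braidρ n) ^ (n - 2) *
        braidρ n ^ ((i : ℤ) - 1) := by
  obtain ⟨k, rfl⟩ : ∃ k, i = k + 1 := ⟨i - 1, by omega⟩
  obtain ⟨p, rfl⟩ : ∃ p, n = p + 2 := ⟨n - 2, by omega⟩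
  rw [braidθ_eq_braidρ_pow, show p + 2 - 2 = p from rfl]
  set ρ := braidρ (p + 2)
  set s := σ (p + 2)
  have hσ : s (k + 1) = (ρ ^ k)⁻¹ * s 1 * ρ ^ k := by
    have h := SemiconjBy.pow_of_forall_pred (s := s) (x := ρ) (a := 1) (m := k)
      fun j hj hjk => semiconjBy_braidρ_σ hj (by omega)
    rw [mul_assoc, ← h.eq, Nat.add_comm 1 k, inv_mul_cancel_left]
  have hpow : (s 1 * ρ) ^ p = ρ ^ (p + 1) * (s 1)⁻¹ := by
    have h : (ρ * s 1) ^ (p + 1) = ρ ^ (p + 2) := braidρ_mul_σ_one_pow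
    have h' : ρ * ((s 1 * ρ) ^ p * s 1) = ρ * ρ ^ (p + 1) := by
      rw [← mul_assoc, ← mul_pow_mul, mul_assoc, ← pow_succ, h, pow_succ']
    rw [eq_mul_inv_iff_mul_eq]
    exact mul_left_cancel h'
  rw [hσ, hpow]
  push_cast
  group

/-- in `B_n`, for `1 ≤ i ≤ n-1`,
`σ_i⁻¹ = θ⁻¹ ρ^{2-i} (σ_1 ρ)^{n-2} ρ^{i-1}`. -/
theorem sigma_inv_formula (n : ℕ) (hn : 3 ≤ n) (i : ℕ) (h1 : 1 ≤ i) (h2 : i ≤ n - 1) :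
    (σ n i)⁻¹ =
      (braidθ n)⁻¹ * braidρ n ^ (2 - (i : ℤ)) * (σ n 1 * braidρ n) ^ (n - 2) *
        braidρ n ^ ((i : ℤ) - 1) :=
  sigma_inv_formula_general n i h1 h2
end

section
/- Every element of the braid group B_n is conjugate to a braid of the form θ^μ β(I), where μ is an integer, I = (i_1,…,i_d) is a finite nonempty sequence of positive integers, and β(I) = σ_1^{i_1}ρ σ_1^{i_2}ρ ⋯ σ_1^{i_d}ρ. -/
/-- `β(I) = σ_1^{i_1} ρ σ_1^{i_2} ρ ⋯ σ_1^{i_d} ρ` for a sequence `I` of positive integers. -/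
noncomputable def braidβ (n : ℕ) (I : List ℕ) : BraidGroup n :=
  (I.map (fun i => σ n 1 ^ i * braidρ n)).prod

/-!
The braid `ρ` conjugates `σ_{i+1}` to `σ_i`, and `ρ²` conjugates `σ_1` to `σ_{n-1}`, so `σ_i`
returns to itself after conjugation by `ρ^n`: thus `ρ^n` is central, and since `ρ` is conjugate
to `δ = σ_1 ⋯ σ_{n-1}`, `ρ^n = θ`. Pushing `ρ` through `ρ = σ_{n-1} ⋯ σ_1` one letter at a time
gives `ρ^{n-1} = (σ_1 ρ)^{n-2} σ_1`, hence `θ = (σ_1 ρ)^{n-1}`.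

As `σ_1` and `ρ` generate `B_n`, these identities show that the monoid generated by `θ^{±1}`, `σ_1`
and `σ_1 ρ` is all of `B_n`. Because `θ` is central its elements have the form `θ^μ β(I) σ_1^s`;
conjugating `σ_1^s` to the front merges it into the first exponent of `I`, and `θ = β(1, …, 1)`
makes `I` nonempty.
-/

namespace BraidGroup

variable {n : ℕ}

lemma σ_eq_of {i : ℕ} (h₁ : 1 ≤ i) (h₂ : i ≤ n - 1) :
    σ n i = PresentedGroup.of (⟨i - 1, by omega⟩ : Fin (n - 1)) :=
  dif_pos ⟨h₁, h₂⟩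

lemma of_eq_σ (x : Fin (n - 1)) : (PresentedGroup.of x : BraidGroup n) = σ n (x + 1) := by
  rw [σ_eq_of (by omega) (by omega)]
  rfl

lemma σ_eq_one {i : ℕ} (h : ¬ (1 ≤ i ∧ i ≤ n - 1)) : σ n i = 1 :=
  dif_neg h

lemma commute_σ_σ {i j : ℕ} (h : i + 2 ≤ j) : Commute (σ n i) (σ n j) := by
  by_cases hi : 1 ≤ i
  · by_cases hj : j ≤ n - 1
    · rw [σ_eq_of hi (by omega), σ_eq_of (by omega) hj]
      refine PresentedGroup.mk_eq_mk_of_mul_inv_mem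
        (Or.inl ⟨⟨i - 1, by omega⟩, ⟨j - 1, by omega⟩, by simp only; omega, ?_⟩)
      group
    · rw [σ_eq_one (i := j) (by omega)]
      exact Commute.one_right _
  · rw [σ_eq_one (by omega)]
    exact Commute.one_left _

lemma σ_mul_σ_succ_mul_σ {i : ℕ} (h₁ : 1 ≤ i) (h₂ : i + 1 ≤ n - 1) :
    σ n i * σ n (i + 1) * σ n i = σ n (i + 1) * σ n i * σ n (i + 1) := by
  rw [σ_eq_of h₁ (by omega), σ_eq_of (by omega) h₂]
  exact PresentedGroup.mk_eq_mk_of_mul_inv_mem (Or.inr ⟨_, _, by simp only; omega, rfl⟩)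

/-- `descProd n a m = σ_{a+m} ⋯ σ_{a+2} σ_{a+1}`. -/
noncomputable def descProd (n a : ℕ) : ℕ → BraidGroup n
  | 0 => 1
  | m + 1 => σ n (a + m + 1) * descProd n a m

/-- `ascProd n k = σ_1 σ_2 ⋯ σ_k`. -/
noncomputable def ascProd (n : ℕ) : ℕ → BraidGroup n
  | 0 => 1
  | k + 1 => ascProd n k * σ n (k + 1)

lemma descProd_zero_succ (m : ℕ) : descProd n 0 (m + 1) = σ n (m + 1) * descProd n 0 m := by
  rw [descProd, zero_add]

lemma braidρ_eq_descProd : braidρ n = descProd n 0 (n - 1) := by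
  suffices ∀ m, (((List.range m).map (fun k => σ n (k + 1))).reverse).prod = descProd n 0 m from
    this (n - 1)
  intro m
  induction m with
  | zero => rfl
  | succ m ih => simp [List.range_succ, ih, descProd]

lemma braidδ_eq_ascProd : braidδ n = ascProd n (n - 1) := by
  suffices ∀ k, ((List.range k).map (fun i => σ n (i + 1))).prod = ascProd n k from this (n - 1)
  intro k
  induction k with
  | zero => rfl
  | succ k ih => simp [List.range_succ, ih, ascProd]

lemma descProd_succ' (a m : ℕ) : descProd n a (m + 1) = descProd n (a + 1) m * σ n (a + 1) := by
  induction m with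
  | zero => simp [descProd]
  | succ m ih =>
    rw [descProd, ih, descProd, mul_assoc]
    ring_nf

lemma commute_σ_descProd_of_lt {i a : ℕ} (h : i < a) (m : ℕ) :
    Commute (σ n i) (descProd n a m) := by
  induction m with
  | zero => exact Commute.one_right _
  | succ m ih => exact (commute_σ_σ (by omega)).mul_right ih

lemma commute_descProd_σ_of_lt {i a m : ℕ} (h : a + m + 1 < i) :
    Commute (descProd n a m) (σ n i) := by
  induction m with
  | zero => exact Commute.one_left _
  | succ m ih => exact (commute_σ_σ (by omega)).mul_left (ih (by omega))

lemma commute_ascProd_descProd {k a : ℕ} (h : k < a) (m : ℕ) :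
    Commute (ascProd n k) (descProd n a m) := by
  induction k with
  | zero => exact Commute.one_left _
  | succ k ih => exact (ih (by omega)).mul_left (commute_σ_descProd_of_lt h m)

lemma isConj_braidρ_ascProd_mul_descProd {k : ℕ} (hk : k ≤ n - 1) :
    IsConj (braidρ n) (ascProd n k * descProd n k (n - 1 - k)) := by
  induction k with
  | zero => rw [braidρ_eq_descProd, ascProd, one_mul, Nat.sub_zero]
  | succ k ih =>
    have hsplit : ascProd n k * descProd n k (n - 1 - k) =
        descProd n (k + 1) (n - 1 - (k + 1)) * ascProd n (k + 1) := by
      rw [show n - 1 - k = n - 1 - (k + 1) + 1 by omega, descProd_succ', ← mul_assoc,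
        (commute_ascProd_descProd (by omega) _).eq, mul_assoc, ascProd]
    refine (ih (by omega)).trans ?_
    rw [hsplit]
    exact isConj_iff.mpr ⟨ascProd n (k + 1), by group⟩

lemma isConj_braidρ_braidδ : IsConj (braidρ n) (braidδ n) := by
  simpa [descProd, braidδ_eq_ascProd] using isConj_braidρ_ascProd_mul_descProd (n := n) le_rfl

lemma σ_mul_descProd {i m : ℕ} (h₁ : 1 ≤ i) (h₂ : i < m) (hm : m ≤ n - 1) :
    σ n i * descProd n 0 m = descProd n 0 m * σ n (i + 1) := by
  induction m with
  | zero => omega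
  | succ m ih =>
    rw [descProd_zero_succ]
    rcases Nat.lt_succ_iff_lt_or_eq.mp h₂ with h | rfl
    · rw [← mul_assoc, (commute_σ_σ (by omega)).eq, mul_assoc, ih h (by omega), mul_assoc]
    · obtain ⟨j, rfl⟩ : ∃ j, i = j + 1 := ⟨i - 1, by omega⟩
      have hc : σ n (j + 1 + 1) * descProd n 0 j = descProd n 0 j * σ n (j + 1 + 1) :=
        (commute_descProd_σ_of_lt (by omega)).eq.symm
      rw [descProd_zero_succ, ← mul_assoc, ← mul_assoc, σ_mul_σ_succ_mul_σ h₁ (by omega)]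
      simp only [mul_assoc, hc]

lemma σ_mul_braidρ {i : ℕ} (h₁ : 1 ≤ i) (h₂ : i ≤ n - 2) :
    σ n i * braidρ n = braidρ n * σ n (i + 1) := by
  rw [braidρ_eq_descProd]
  exact σ_mul_descProd h₁ (by omega) le_rfl

lemma braidρ_mul_descProd_succ {k : ℕ} (hk : k + 1 ≤ n - 1) :
    braidρ n * descProd n 0 (k + 1) = descProd n 0 k * (braidρ n * σ n 1) := by
  induction k with
  | zero => simp [descProd]
  | succ k ih =>
    rw [descProd_zero_succ, ← mul_assoc, ← σ_mul_braidρ (by omega) (by omega), mul_assoc,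
      ih (by omega), ← mul_assoc, descProd_zero_succ]

lemma braidρ_pow_mul_descProd {k j : ℕ} (h : k + j ≤ n - 1) :
    braidρ n ^ j * descProd n 0 (k + j) = descProd n 0 k * (braidρ n * σ n 1) ^ j := by
  induction j with
  | zero => simp
  | succ j ih =>
    rw [pow_succ, mul_assoc, ← add_assoc, braidρ_mul_descProd_succ (by omega), ← mul_assoc,
      ih (by omega), mul_assoc, ← pow_succ]

lemma braidρ_pow_pred (hn : 2 ≤ n) :
    braidρ n ^ (n - 1) = (σ n 1 * braidρ n) ^ (n - 2) * σ n 1 := by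
  have h := braidρ_pow_mul_descProd (n := n) (k := 1) (j := n - 2) (by omega)
  rw [show 1 + (n - 2) = n - 1 by omega, ← braidρ_eq_descProd, ← pow_succ,
    show n - 2 + 1 = n - 1 by omega] at h
  rw [h, mul_pow_mul]
  simp [descProd]

lemma σ_mul_braidρ_sq (hn : 2 ≤ n) : σ n (n - 1) * braidρ n ^ 2 = braidρ n ^ 2 * σ n 1 := by
  have h := braidρ_mul_descProd_succ (n := n) (k := n - 2) (by omega)
  rw [show n - 2 + 1 = n - 1 by omega, ← braidρ_eq_descProd] at h
  have hρ : σ n (n - 1) * descProd n 0 (n - 2) = braidρ n := by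
    have h' := descProd_zero_succ (n := n) (n - 2)
    rw [show n - 2 + 1 = n - 1 by omega] at h'
    rw [braidρ_eq_descProd, h']
  calc σ n (n - 1) * braidρ n ^ 2 = σ n (n - 1) * descProd n 0 (n - 2) * (braidρ n * σ n 1) := by
        rw [sq, h, mul_assoc]
    _ = braidρ n ^ 2 * σ n 1 := by rw [hρ, sq, mul_assoc]

lemma σ_mul_braidρ_pow {i k : ℕ} (h₁ : 1 ≤ i) (h₂ : i + k ≤ n - 1) :
    σ n i * braidρ n ^ k = braidρ n ^ k * σ n (i + k) := by
  induction k with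
  | zero => simp
  | succ k ih =>
    rw [pow_succ, ← mul_assoc, ih (by omega), mul_assoc, σ_mul_braidρ (by omega) (by omega),
      ← mul_assoc, ← pow_succ, add_assoc]

lemma σ_mul_braidρ_pow_self (hn : 2 ≤ n) {i : ℕ} (h₁ : 1 ≤ i) (h₂ : i ≤ n - 1) :
    σ n i * braidρ n ^ n = braidρ n ^ n * σ n i := by
  have hsplit : braidρ n ^ n = braidρ n ^ (n - 1 - i) * braidρ n ^ 2 * braidρ n ^ (i - 1) := by
    rw [← pow_add, ← pow_add]
    congr 1
    omega
  have hlow : σ n 1 * braidρ n ^ (i - 1) = braidρ n ^ (i - 1) * σ n i := by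
    rw [σ_mul_braidρ_pow le_rfl (by omega), show 1 + (i - 1) = i by omega]
  have hhigh : σ n i * braidρ n ^ (n - 1 - i) = braidρ n ^ (n - 1 - i) * σ n (n - 1) := by
    rw [σ_mul_braidρ_pow h₁ (by omega), show i + (n - 1 - i) = n - 1 by omega]
  rw [hsplit, ← mul_assoc, ← mul_assoc, hhigh, mul_assoc _ (σ n (n - 1)),
    σ_mul_braidρ_sq hn, ← mul_assoc, mul_assoc _ (σ n 1), hlow, ← mul_assoc]

lemma commute_braidρ_pow_self (hn : 2 ≤ n) (g : BraidGroup n) : Commute (braidρ n ^ n) g := by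
  suffices g ∈ Subgroup.centralizer {braidρ n ^ n} from
    (Subgroup.mem_centralizer_singleton_iff.mp this).symm
  refine PresentedGroup.generated_by _ _ (fun x => ?_) g
  rw [Subgroup.mem_centralizer_singleton_iff, of_eq_σ]
  exact σ_mul_braidρ_pow_self hn (by omega) (by omega)

lemma braidρ_pow_eq_braidθ (hn : 2 ≤ n) : braidρ n ^ n = braidθ n := by
  obtain ⟨c, hc⟩ := isConj_iff.mp (isConj_braidρ_braidδ.pow n)
  rw [braidθ, ← hc, (commute_braidρ_pow_self hn c).symm.eq, mul_inv_cancel_right]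

lemma commute_braidθ (hn : 2 ≤ n) (g : BraidGroup n) : Commute (braidθ n) g :=
  braidρ_pow_eq_braidθ hn ▸ commute_braidρ_pow_self hn g

lemma braidθ_eq_braidρ_mul (hn : 2 ≤ n) :
    braidθ n = braidρ n * ((σ n 1 * braidρ n) ^ (n - 2) * σ n 1) := by
  rw [← braidρ_pow_eq_braidθ hn, ← braidρ_pow_pred hn, ← pow_succ', Nat.sub_add_cancel (by omega)]

lemma braidθ_eq_σ_one_mul_braidρ_pow (hn : 2 ≤ n) :
    braidθ n = (σ n 1 * braidρ n) ^ (n - 1) := by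
  calc braidθ n = σ n 1 * braidθ n * (σ n 1)⁻¹ := by
        rw [← (commute_braidθ hn _).eq, mul_inv_cancel_right]
    _ = (σ n 1 * braidρ n) ^ (n - 1) := by
        have hpow : (σ n 1 * braidρ n) ^ (n - 1) =
            σ n 1 * braidρ n * (σ n 1 * braidρ n) ^ (n - 2) := by
          rw [← pow_succ']
          congr 1
          omega
        rw [braidθ_eq_braidρ_mul hn, hpow]
        simp only [mul_assoc, mul_inv_cancel, mul_one]

lemma closure_σ_one_braidρ_eq_top : Subgroup.closure {σ n 1, braidρ n} = ⊤ := by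
  set H := Subgroup.closure {σ n 1, braidρ n}
  have hρ : braidρ n ∈ H := Subgroup.subset_closure (by simp)
  have hσ : ∀ i, i + 1 ≤ n - 1 → σ n (i + 1) ∈ H := by
    intro i hi
    induction i with
    | zero => exact Subgroup.subset_closure (by simp)
    | succ i ih =>
      have hconj : σ n (i + 1 + 1) = (braidρ n)⁻¹ * (σ n (i + 1) * braidρ n) := by
        rw [σ_mul_braidρ (by omega) (by omega), inv_mul_cancel_left]
      rw [hconj]
      exact mul_mem (inv_mem hρ) (mul_mem (ih (by omega)) hρ)
  exact eq_top_iff.mpr fun g _ ↦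
    PresentedGroup.generated_by _ H (fun x ↦ of_eq_σ x ▸ hσ x (by omega)) g

lemma closure_braidθ_inv_σ_one_mul_braidρ_eq_top (hn : 2 ≤ n) :
    Submonoid.closure {braidθ n, (braidθ n)⁻¹, σ n 1, σ n 1 * braidρ n} = ⊤ := by
  set M := Submonoid.closure {braidθ n, (braidθ n)⁻¹, σ n 1, σ n 1 * braidρ n}
  have hθ : braidθ n ∈ M := Submonoid.subset_closure (by simp)
  have hθ_inv : (braidθ n)⁻¹ ∈ M := Submonoid.subset_closure (by simp)
  have hσ : σ n 1 ∈ M := Submonoid.subset_closure (by simp)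
  have hσρ : σ n 1 * braidρ n ∈ M := Submonoid.subset_closure (by simp)
  have hρ_inv : (braidρ n)⁻¹ ∈ M := by
    have h : (braidρ n)⁻¹ = (braidθ n)⁻¹ * ((σ n 1 * braidρ n) ^ (n - 2) * σ n 1) := by
      rw [← braidρ_pow_pred hn, ← braidρ_pow_eq_braidθ hn, pow_sub _ (by omega), pow_one,
        inv_mul_cancel_left]
    rw [h]
    exact mul_mem hθ_inv (mul_mem (pow_mem hσρ _) hσ)
  have hρ : braidρ n ∈ M := by
    have h : braidρ n = braidθ n * (braidρ n)⁻¹ ^ (n - 1) := by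
      rw [← braidρ_pow_eq_braidθ hn, inv_pow, ← pow_sub _ (by omega), Nat.sub_sub_self (by omega),
        pow_one]
    rw [h]
    exact mul_mem hθ (pow_mem hρ_inv _)
  have hσ_inv : (σ n 1)⁻¹ ∈ M := by
    have h : (σ n 1)⁻¹ = (braidθ n)⁻¹ * (braidρ n * (σ n 1 * braidρ n) ^ (n - 2)) := by
      rw [braidθ_eq_braidρ_mul hn]
      group
    rw [h]
    exact mul_mem hθ_inv (mul_mem hρ (pow_mem hσρ _))
  rw [eq_top_iff, ← Subgroup.top_toSubmonoid, ← closure_σ_one_braidρ_eq_top,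
    Subgroup.closure_toSubmonoid, Submonoid.closure_le]
  rintro g ((rfl | rfl) | (h | h))
  · exact hσ
  · exact hρ
  · rw [← inv_inv g, h]
    exact hσ_inv
  · rw [← inv_inv g, h]
    exact hρ_inv

lemma σ_one_pow_mul_braidβ_cons (s i : ℕ) (I : List ℕ) :
    σ n 1 ^ s * braidβ n (i :: I) = braidβ n ((s + i) :: I) := by
  simp [braidβ, pow_add, mul_assoc]

lemma braidθ_eq_braidβ_replicate (hn : 2 ≤ n) : braidθ n = braidβ n (List.replicate (n - 1) 1) := by
  simp [braidβ, braidθ_eq_σ_one_mul_braidρ_pow hn]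

lemma exists_eq_braidθ_zpow_mul_braidβ_mul_σ_one_pow (hn : 2 ≤ n) (b : BraidGroup n) :
    ∃ (μ : ℤ) (I : List ℕ) (s : ℕ), (∀ i ∈ I, 1 ≤ i) ∧
      b = braidθ n ^ μ * braidβ n I * σ n 1 ^ s := by
  have hb : b ∈ Submonoid.closure {braidθ n, (braidθ n)⁻¹, σ n 1, σ n 1 * braidρ n} := by
    simp [closure_braidθ_inv_σ_one_mul_braidρ_eq_top hn]
  induction hb using Submonoid.closure_induction_right with
  | one => exact ⟨0, [], 0, by simp, by simp [braidβ]⟩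
  | mul_right x _ y hy ih =>
    obtain ⟨μ, I, s, hI, rfl⟩ := ih
    have hθ (ν : ℤ) : braidθ n ^ μ * braidβ n I * σ n 1 ^ s * braidθ n ^ ν =
        braidθ n ^ (μ + ν) * braidβ n I * σ n 1 ^ s := by
      rw [zpow_add, ← ((commute_braidθ hn _).zpow_left ν).eq]
      group
    rcases hy with rfl | rfl | rfl | rfl
    · exact ⟨μ + 1, I, s, hI, by rw [← hθ 1, zpow_one]⟩
    · exact ⟨μ + -1, I, s, hI, by rw [← hθ (-1), zpow_neg_one]⟩
    · exact ⟨μ, I, s + 1, hI, by rw [pow_succ, mul_assoc]⟩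
    · refine ⟨μ, I ++ [s + 1], 0, ?_, ?_⟩
      · simpa [or_imp, forall_and] using hI
      · simp [braidβ, pow_succ, mul_assoc]

lemma isConj_braidθ_zpow_mul_braidβ_cons_mul_σ_one_pow (hn : 2 ≤ n) (μ : ℤ) (s i : ℕ)
    (I : List ℕ) : IsConj (braidθ n ^ μ * braidβ n (i :: I) * σ n 1 ^ s)
      (braidθ n ^ μ * braidβ n ((s + i) :: I)) := by
  refine isConj_iff.mpr ⟨σ n 1 ^ s, ?_⟩
  calc σ n 1 ^ s * (braidθ n ^ μ * braidβ n (i :: I) * σ n 1 ^ s) * (σ n 1 ^ s)⁻¹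
      = σ n 1 ^ s * braidθ n ^ μ * braidβ n (i :: I) := by group
    _ = braidθ n ^ μ * (σ n 1 ^ s * braidβ n (i :: I)) := by
      rw [← ((commute_braidθ hn _).zpow_left μ).eq, mul_assoc]
    _ = braidθ n ^ μ * braidβ n ((s + i) :: I) := by rw [σ_one_pow_mul_braidβ_cons]

end BraidGroup

/-- every element of `B_n` is conjugate to `θ^μ β(I)` for some integer `μ`
and some finite nonempty sequence `I` of positive integers. -/
theorem conj_normal_form (n : ℕ) (hn : 3 ≤ n) (b : BraidGroup n) :
    ∃ (μ : ℤ) (I : List ℕ), I ≠ [] ∧ (∀ i ∈ I, 1 ≤ i) ∧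
      IsConj b (braidθ n ^ μ * braidβ n I) := by
  obtain ⟨μ, I, s, hI, rfl⟩ :=
    BraidGroup.exists_eq_braidθ_zpow_mul_braidβ_mul_σ_one_pow (by omega) b
  obtain ⟨ν, i, J, hiJ, hIJ⟩ : ∃ (ν : ℤ) (i : ℕ) (J : List ℕ), (∀ j ∈ i :: J, 1 ≤ j) ∧
      braidθ n ^ μ * braidβ n I = braidθ n ^ ν * braidβ n (i :: J) := by
    cases I with
    | nil =>
      refine ⟨μ - 1, 1, List.replicate (n - 2) 1, by simp [List.mem_replicate], ?_⟩
      rw [← List.replicate_succ, show n - 2 + 1 = n - 1 by omega,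
        ← BraidGroup.braidθ_eq_braidβ_replicate (by omega), ← zpow_add_one, sub_add_cancel]
      simp [braidβ]
    | cons i J => exact ⟨μ, i, J, hI, rfl⟩
  refine ⟨ν, (s + i) :: J, List.cons_ne_nil _ _, ?_, ?_⟩
  · simp only [List.mem_cons, forall_eq_or_imp] at hiJ ⊢
    exact ⟨by omega, hiJ.2⟩
  · rw [hIJ]
    exact BraidGroup.isConj_braidθ_zpow_mul_braidβ_cons_mul_σ_one_pow (by omega) ν s i J
end

section
/- Under the Artin action of B_n on F_n with generators a_1,…,a_n, the full twist θ = (σ_1⋯σ_{n-1})^n acts by conjugation by a_n: a_i^θ = a_n a_i a_n^{-1} for all i = 1,…,n. -/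
/-!
With `δ = σ_1 ⋯ σ_{n-1}`, a direct computation gives `a_j^δ = a_n a_{n-1}⁻¹ a_{j-1}` for
`1 ≤ j ≤ n`; in particular `δ` fixes `a_n`. Iterating, `a_j^{δ^k} = a_n a_{n-k}⁻¹ a_{j-k}`
as long as `k ≤ j`. Since `a_0 = 1`, splitting `θ = δ^i δ^{n-i}` gives
`a_i^θ = (a_n a_{n-i}⁻¹)^{δ^{n-i}} = a_n (a_n a_i⁻¹)⁻¹ = a_n a_i a_n⁻¹`.
-/

namespace Artin

/-- `A j` is the generator `a_j = ξ_1⋯ξ_j` of the free group `F_n` (with `A 0 = 1`). -/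
def A (j : ℕ) : FreeGroup ℕ := if j = 0 then 1 else FreeGroup.of j

/-- The effect of the Artin generator `σ_i` on the generators `a_j`. -/
def fwd (i : ℕ) : ℕ → FreeGroup ℕ := fun j =>
  if 1 ≤ i ∧ j = i then A (i + 1) * (A i)⁻¹ * A (i - 1) else FreeGroup.of j

/-- The effect of `σ_i⁻¹` on the generators `a_j`. -/
def bwd (i : ℕ) : ℕ → FreeGroup ℕ := fun j =>
  if 1 ≤ i ∧ j = i then A (i - 1) * (A i)⁻¹ * A (i + 1) else FreeGroup.of j

lemma lift_fwd_A (i k : ℕ) (h : k ≠ i) : FreeGroup.lift (fwd i) (A k) = A k := by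
  by_cases hk : k = 0
  · simp [A, hk]
  · simp only [A, if_neg hk, FreeGroup.lift_apply_of, fwd]
    rw [if_neg]
    rintro ⟨-, rfl⟩; exact h rfl

lemma lift_bwd_A (i k : ℕ) (h : k ≠ i) : FreeGroup.lift (bwd i) (A k) = A k := by
  by_cases hk : k = 0
  · simp [A, hk]
  · simp only [A, if_neg hk, FreeGroup.lift_apply_of, bwd]
    rw [if_neg]
    rintro ⟨-, rfl⟩; exact h rfl

lemma comp_bwd_fwd (i : ℕ) :
    (FreeGroup.lift (bwd i)).comp (FreeGroup.lift (fwd i)) = MonoidHom.id _ := by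
  apply FreeGroup.ext_hom
  intro j
  simp only [MonoidHom.comp_apply, FreeGroup.lift_apply_of, MonoidHom.id_apply]
  unfold fwd
  by_cases h : 1 ≤ i ∧ j = i
  · obtain ⟨hi, hji⟩ := h
    subst hji
    rw [if_pos ⟨hi, rfl⟩]
    have hj : A j = FreeGroup.of j := by simp only [A, if_neg (by omega : ¬ j = 0)]
    rw [map_mul, map_mul, map_inv]
    rw [lift_bwd_A j (j + 1) (by omega), lift_bwd_A j (j - 1) (by omega)]
    rw [← hj]
    have hAj : FreeGroup.lift (bwd j) (A j) = A (j - 1) * (A j)⁻¹ * A (j + 1) := by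
      rw [hj, FreeGroup.lift_apply_of, bwd, if_pos ⟨hi, rfl⟩, hj]
    rw [hAj]
    group
  · rw [if_neg h]
    simp only [FreeGroup.lift_apply_of, bwd]
    rw [if_neg h]

lemma comp_fwd_bwd (i : ℕ) :
    (FreeGroup.lift (fwd i)).comp (FreeGroup.lift (bwd i)) = MonoidHom.id _ := by
  apply FreeGroup.ext_hom
  intro j
  simp only [MonoidHom.comp_apply, FreeGroup.lift_apply_of, MonoidHom.id_apply]
  unfold bwd
  by_cases h : 1 ≤ i ∧ j = i
  · obtain ⟨hi, hji⟩ := h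
    subst hji
    rw [if_pos ⟨hi, rfl⟩]
    have hj : A j = FreeGroup.of j := by simp only [A, if_neg (by omega : ¬ j = 0)]
    rw [map_mul, map_mul, map_inv]
    rw [lift_fwd_A j (j + 1) (by omega), lift_fwd_A j (j - 1) (by omega)]
    rw [← hj]
    have hAj : FreeGroup.lift (fwd j) (A j) = A (j + 1) * (A j)⁻¹ * A (j - 1) := by
      rw [hj, FreeGroup.lift_apply_of, fwd, if_pos ⟨hi, rfl⟩, hj]
    rw [hAj]
    group
  · rw [if_neg h]
    simp only [FreeGroup.lift_apply_of, fwd]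
    rw [if_neg h]

/-- The automorphism of `F_n` given by the Artin generator `σ_i`. -/
def gen (i : ℕ) : MulAut (FreeGroup ℕ) where
  toFun := FreeGroup.lift (fwd i)
  invFun := FreeGroup.lift (bwd i)
  left_inv x := by
    have := DFunLike.congr_fun (comp_bwd_fwd i) x
    simpa using this
  right_inv x := by
    have := DFunLike.congr_fun (comp_fwd_bwd i) x
    simpa using this
  map_mul' := map_mul _

/-- The Artin representation, as a homomorphism from words in the braid generators
(`FreeGroup ℕ`, letter `i` standing for `σ_i`) to the opposite of `Aut(F_n)`;
the opposite group is used so that `w^{βγ} = (w^β)^γ`. -/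
def rep : FreeGroup ℕ →* (MulAut (FreeGroup ℕ))ᵐᵒᵖ :=
  FreeGroup.lift (fun i => MulOpposite.op (gen i))

/-- The (right) Artin action: `act b w = w^b`. -/
def act (b w : FreeGroup ℕ) : FreeGroup ℕ := (rep b).unop w


/-- The word `ρ = σ_{n-1} ⋯ σ_2 σ_1` in the braid generators. -/
def ρw (n : ℕ) : FreeGroup ℕ :=
  (((List.range (n - 1)).map (fun k => FreeGroup.of (k + 1))).reverse).prod

/-- The word `δ = σ_1 σ_2 ⋯ σ_{n-1}` in the braid generators. -/
def δw (n : ℕ) : FreeGroup ℕ :=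
  ((List.range (n - 1)).map (fun k => FreeGroup.of (k + 1))).prod

/-- The full-twist word `θ = (σ_1 ⋯ σ_{n-1})^n`. -/
def θw (n : ℕ) : FreeGroup ℕ := δw n ^ n

/-- The word `β(m) = σ_1^m ρ`. -/
def βw (n m : ℕ) : FreeGroup ℕ := FreeGroup.of 1 ^ m * ρw n

@[simp]
lemma act_one (w : FreeGroup ℕ) : act 1 w = w := rfl

lemma act_mul (b c w : FreeGroup ℕ) : act (b * c) w = act c (act b w) := by
  simp [act, map_mul]

@[simp]
lemma act_apply_mul (b x y : FreeGroup ℕ) : act b (x * y) = act b x * act b y :=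
  map_mul _ _ _

@[simp]
lemma act_apply_inv (b x : FreeGroup ℕ) : act b x⁻¹ = (act b x)⁻¹ :=
  map_inv _ _

lemma act_of_A_of_ne {i j : ℕ} (h : j ≠ i) : act (FreeGroup.of i) (A j) = A j :=
  lift_fwd_A i j h

lemma act_of_A_self {i : ℕ} (h : 1 ≤ i) :
    act (FreeGroup.of i) (A i) = A (i + 1) * (A i)⁻¹ * A (i - 1) := by
  have hA : A i = FreeGroup.of i := if_neg (by omega)
  change FreeGroup.lift (fwd i) (A i) = _
  rw [hA, FreeGroup.lift_apply_of, fwd, if_pos ⟨h, rfl⟩, hA]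

lemma A_zero : A 0 = 1 := rfl

lemma δw_succ_succ (m : ℕ) : δw (m + 2) = δw (m + 1) * FreeGroup.of (m + 1) := by
  simp [δw, List.range_succ]

lemma act_δw_A_of_lt {n j : ℕ} (h : n < j) : act (δw n) (A j) = A j := by
  induction n using Nat.twoStepInduction with
  | zero | one => rfl
  | more m _ ih => rw [δw_succ_succ, act_mul, ih (by omega), act_of_A_of_ne (by omega)]

lemma act_δw_A {n j : ℕ} (h1 : 1 ≤ j) (h2 : j ≤ n) :
    act (δw n) (A j) = A n * (A (n - 1))⁻¹ * A (j - 1) := by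
  induction n using Nat.twoStepInduction generalizing j with
  | zero => omega
  | one =>
    obtain rfl : j = 1 := by omega
    exact (inv_mul_cancel_right (A 1) (A 0)).symm
  | more m _ ih =>
    rw [δw_succ_succ, act_mul]
    rcases Nat.lt_or_ge j (m + 2) with hj | hj
    · rw [ih h1 (by omega)]
      simp only [Nat.add_sub_cancel, show m + 2 - 1 = m + 1 from rfl, act_apply_mul, act_apply_inv,
        act_of_A_self (by omega : 1 ≤ m + 1), act_of_A_of_ne (by omega : m ≠ m + 1),
        act_of_A_of_ne (by omega : j - 1 ≠ m + 1)]
      group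
    · obtain rfl : j = m + 2 := by omega
      rw [act_δw_A_of_lt (by omega), act_of_A_of_ne (by omega)]
      group

lemma act_δw_A_self (n : ℕ) : act (δw n) (A n) = A n := by
  cases n with
  | zero => rfl
  | succ m => rw [act_δw_A (by omega) le_rfl]; group

lemma act_pow_eq_self {b w : FreeGroup ℕ} (h : act b w = w) (k : ℕ) : act (b ^ k) w = w := by
  induction k with
  | zero => rfl
  | succ k ih => rw [pow_succ, act_mul, ih, h]

lemma act_δw_pow_A {n j k : ℕ} (hk : k ≤ j) (hj : j ≤ n) :
    act (δw n ^ k) (A j) = A n * (A (n - k))⁻¹ * A (j - k) := by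
  induction k with
  | zero => simp
  | succ k ih =>
    rw [pow_succ, act_mul, ih (by omega)]
    simp only [act_apply_mul, act_apply_inv, act_δw_A_self,
      act_δw_A (n := n) (j := n - k) (by omega) (by omega),
      act_δw_A (n := n) (j := j - k) (by omega) (by omega), Nat.sub_sub]
    group

theorem fullTwist_acts_by_conj_general (n : ℕ) (i : ℕ) (h2 : i ≤ n) :
    act (θw n) (A i) = A n * A i * (A n)⁻¹ := by
  have hθ : θw n = δw n ^ (i + (n - i)) := by rw [θw, Nat.add_sub_cancel' h2]
  rw [hθ, pow_add, act_mul, act_δw_pow_A le_rfl h2, Nat.sub_self, A_zero, mul_one]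
  simp only [act_apply_mul, act_apply_inv, act_pow_eq_self (act_δw_A_self n),
    act_δw_pow_A le_rfl (Nat.sub_le n i), Nat.sub_sub_self h2, Nat.sub_self, A_zero]
  group

/-- the full twist `θ = (σ_1⋯σ_{n-1})^n` acts on `F_n` by conjugation by `a_n`:
`a_i^θ = a_n a_i a_n⁻¹` for all `i = 1, …, n`. -/
theorem fullTwist_acts_by_conj (n : ℕ) (hn : 3 ≤ n) (i : ℕ) (h1 : 1 ≤ i) (h2 : i ≤ n) :
    act (θw n) (A i) = A n * A i * (A n)⁻¹ :=
  fullTwist_acts_by_conj_general n i h2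

end Artin
end
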